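/- Let R ≥ 1, η ∈ (0,1), s ∈ {+1,−1}, and let g_± be the entire extension of h_±(r) = h_{R+sη}(r)·h_η(r)/(π(sinh(2η)−2η)). Then for every L > 0 there exists a constant C = C(L,R,η) > 0 such that |g_±(r)| ≤ C·(1+|r|)^{−4} for all complex r with |Im(r)| < L. -/

import Mathlib

open Complex

/-! Away from `0, ±i`, `g` is the normalized product `h_{R+sη} h_η`. On the strip `|Im r| ≤ L`
the numerators `sinh (ρ (1 ± i r))` are bounded by `exp (|ρ| (1 + L))` while the denominators
`i r (1 ± i r)` grow like `|r|²`, so each factor is `O(|r|⁻²)` and the product is `O(|r|⁻⁴)`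
for `|r| ≥ 2`. On the disc `|r| ≤ 2` the entire function `g` is bounded by compactness. -/

/-- The closed-form Selberg transform of the indicator of a hyperbolic ball of
radius `ρ`, as a function of a complex spectral parameter `r`. -/
noncomputable def hSelC (ρ : ℝ) (r : ℂ) : ℂ :=
  2 * (Real.pi : ℂ) * Complex.sinh ((ρ : ℂ) * (1 + Complex.I * r)) /
      (Complex.I * r * (1 + Complex.I * r))
    - 2 * (Real.pi : ℂ) * Complex.sinh ((ρ : ℂ) * (1 - Complex.I * r)) /
      (Complex.I * r * (1 - Complex.I * r))

theorem Complex.norm_sinh_le_exp_abs_re (z : ℂ) : ‖sinh z‖ ≤ Real.exp |z.re| := by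
  have h₁ : ‖exp z‖ ≤ Real.exp |z.re| := by
    rw [norm_exp]; exact Real.exp_le_exp.2 (le_abs_self _)
  have h₂ : ‖exp (-z)‖ ≤ Real.exp |z.re| := by
    rw [norm_exp, neg_re]; exact Real.exp_le_exp.2 (neg_le_abs _)
  calc ‖sinh z‖ = ‖exp z - exp (-z)‖ / 2 := by rw [sinh, norm_div, RCLike.norm_ofNat]
    _ ≤ (‖exp z‖ + ‖exp (-z)‖) / 2 := by gcongr; exact norm_sub_le _ _
    _ ≤ Real.exp |z.re| := by linarith

theorem norm_two_pi_sinh_div_le (ρ : ℝ) {r w : ℂ} (hw : ‖r‖ ≤ 2 * ‖w‖) :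
    ‖2 * (Real.pi : ℂ) * sinh (ρ * w) / (I * r * w)‖
      ≤ 4 * Real.pi * Real.exp (|ρ| * |w.re|) / ‖r‖ ^ 2 := by
  have hsinh : ‖sinh (ρ * w)‖ ≤ Real.exp (|ρ| * |w.re|) := by
    simpa [abs_mul] using norm_sinh_le_exp_abs_re (ρ * w)
  rcases eq_or_ne r 0 with rfl | hr
  · simp
  have hr' : 0 < ‖r‖ := norm_pos_iff.2 hr
  have hden : ‖r‖ ^ 2 / 2 ≤ ‖I * r * w‖ := by
    rw [norm_mul, norm_mul, norm_I, one_mul]; nlinarith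
  rw [norm_div, norm_mul, norm_mul, RCLike.norm_ofNat, norm_real,
    Real.norm_of_nonneg Real.pi_pos.le]
  calc 2 * Real.pi * ‖sinh (ρ * w)‖ / ‖I * r * w‖
      ≤ 2 * Real.pi * Real.exp (|ρ| * |w.re|) / (‖r‖ ^ 2 / 2) := by gcongr
    _ = 4 * Real.pi * Real.exp (|ρ| * |w.re|) / ‖r‖ ^ 2 := by field_simp; ring

theorem norm_hSelC_le (ρ L : ℝ) {r : ℂ} (hr : 2 ≤ ‖r‖) (him : |r.im| ≤ L) :
    ‖hSelC ρ r‖ ≤ 8 * Real.pi * Real.exp (|ρ| * (1 + L)) / ‖r‖ ^ 2 := by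
  have hIr : ‖I * r‖ = ‖r‖ := by rw [norm_mul, norm_I, one_mul]
  have term : ∀ w : ℂ, ‖r‖ - 1 ≤ ‖w‖ → |w.re| ≤ 1 + L →
      ‖2 * (Real.pi : ℂ) * sinh (ρ * w) / (I * r * w)‖
        ≤ 4 * Real.pi * Real.exp (|ρ| * (1 + L)) / ‖r‖ ^ 2 := fun w hw hre =>
    (norm_two_pi_sinh_div_le ρ (by linarith)).trans (by gcongr)
  obtain ⟨him₁, him₂⟩ := abs_le.1 him
  have hplus := term (1 + I * r) (by simpa [hIr, add_comm] using norm_sub_norm_le (I * r) (-1))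
    (by simp only [add_re, one_re, mul_re, I_re, I_im]; rw [abs_le]; constructor <;> linarith)
  have hminus := term (1 - I * r) (by simpa [hIr, norm_sub_rev] using norm_sub_norm_le (I * r) 1)
    (by simp only [sub_re, one_re, mul_re, I_re, I_im]; rw [abs_le]; constructor <;> linarith)
  calc ‖hSelC ρ r‖ ≤ _ := norm_sub_le _ _
    _ ≤ _ := add_le_add hplus hminus
    _ = _ := by ring

theorem exists_norm_le_div_one_add_norm_pow {E F : Type*} [NormedAddCommGroup E] [ProperSpace E]
    [SeminormedAddCommGroup F] {g : E → F} (hg : Continuous g) {S : Set E} {a K : ℝ}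
    (ha : 0 < a) (n : ℕ) (hK : ∀ x ∈ S, a ≤ ‖x‖ → ‖g x‖ ≤ K / ‖x‖ ^ n) :
    ∃ C, 0 < C ∧ ∀ x ∈ S, ‖g x‖ ≤ C / (1 + ‖x‖) ^ n := by
  obtain ⟨C₀, hC₀⟩ := (isCompact_closedBall (0 : E) a).exists_bound_of_continuousOn
    hg.continuousOn
  refine ⟨(1 + a) ^ n * (|C₀| + 1) + ((1 + a) / a) ^ n * |K|, by positivity, fun x hx => ?_⟩
  rw [le_div_iff₀ (by positivity)]
  rcases le_or_gt ‖x‖ a with hsmall | hlarge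
  · have hgx : ‖g x‖ ≤ |C₀| + 1 :=
      (hC₀ x (mem_closedBall_zero_iff.2 hsmall)).trans ((le_abs_self C₀).trans (by linarith))
    calc ‖g x‖ * (1 + ‖x‖) ^ n ≤ (|C₀| + 1) * (1 + a) ^ n := by gcongr
      _ ≤ _ := by nlinarith [show 0 ≤ ((1 + a) / a) ^ n * |K| by positivity]
  · have hx0 : 0 < ‖x‖ := ha.trans hlarge
    have hone : 1 + ‖x‖ ≤ (1 + a) / a * ‖x‖ := by
      rw [div_mul_eq_mul_div, le_div_iff₀ ha]; nlinarith
    calc ‖g x‖ * (1 + ‖x‖) ^ n ≤ |K| / ‖x‖ ^ n * ((1 + a) / a * ‖x‖) ^ n := by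
          gcongr
          exact (hK x hx hlarge.le).trans (by gcongr; exact le_abs_self K)
      _ = ((1 + a) / a) ^ n * |K| := by rw [mul_pow]; field_simp
      _ ≤ _ := by nlinarith [show 0 ≤ (1 + a) ^ n * (|C₀| + 1) by positivity]

theorem hPM_entire_strip_decay_general
    (R η s : ℝ)
    (g : ℂ → ℂ) (hg : Differentiable ℂ g)
    (hagree : ∀ r : ℂ, r ≠ 0 → r ≠ Complex.I → r ≠ -Complex.I →
      g r = hSelC (R + s * η) r * hSelC η r /
              ((Real.pi : ℂ) * Complex.ofReal (Real.sinh (2 * η) - 2 * η))) :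
    ∀ L : ℝ, 0 < L → ∃ C : ℝ, 0 < C ∧ ∀ r : ℂ, |r.im| < L →
      ‖g r‖ ≤ C / (1 + ‖r‖) ^ 4 := by
  intro L _
  set d : ℂ := (Real.pi : ℂ) * Complex.ofReal (Real.sinh (2 * η) - 2 * η)
  set A := 8 * Real.pi * Real.exp (|R + s * η| * (1 + L))
  set B := 8 * Real.pi * Real.exp (|η| * (1 + L))
  refine exists_norm_le_div_one_add_norm_pow hg.continuous (S := {r | |r.im| < L})
    (K := A * B / ‖d‖) two_pos 4 fun r him hr => ?_
  have hr0 : r ≠ 0 := norm_pos_iff.1 (by linarith)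
  have hrI : r ≠ I := fun h => by norm_num [h] at hr
  have hrnI : r ≠ -I := fun h => by norm_num [h] at hr
  rw [hagree r hr0 hrI hrnI, norm_div, norm_mul]
  calc ‖hSelC (R + s * η) r‖ * ‖hSelC η r‖ / ‖d‖
      ≤ A / ‖r‖ ^ 2 * (B / ‖r‖ ^ 2) / ‖d‖ := by
        gcongr
        exacts [norm_hSelC_le _ _ hr him.le, norm_hSelC_le _ _ hr him.le]
    _ = A * B / ‖d‖ / ‖r‖ ^ 4 := by ring

/-- If `g` is an entire extension of
`h_±(r) = h_{R+sη}(r) h_η(r) / (π(sinh(2η) − 2η))`, then in every horizontal strip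
`|Im r| < L` one has `|g(r)| ≤ C (1+|r|)^{−4}` with `C = C(L,R,η)`. -/
theorem hPM_entire_strip_decay
    (R η s : ℝ) (hR : 1 ≤ R) (hη0 : 0 < η) (hη1 : η < 1) (hs : s = 1 ∨ s = -1)
    (g : ℂ → ℂ) (hg : Differentiable ℂ g)
    (hagree : ∀ r : ℂ, r ≠ 0 → r ≠ Complex.I → r ≠ -Complex.I →
      g r = hSelC (R + s * η) r * hSelC η r /
              ((Real.pi : ℂ) * Complex.ofReal (Real.sinh (2 * η) - 2 * η))) :
    ∀ L : ℝ, 0 < L → ∃ C : ℝ, 0 < C ∧ ∀ r : ℂ, |r.im| < L →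
      ‖g r‖ ≤ C / (1 + ‖r‖) ^ 4 :=
  hPM_entire_strip_decay_general R η s g hg hagree
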